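/- arXiv:1508.05347 — 4 statements merged into one kernel-verified Lean document; each statement's English description precedes it below -/
import Mathlib

section
/- Let $n, m \geq 1$ and let $t_1, \ldots, t_n$ be positive integers with each $t_i \leq m$. Suppose players are ordered so that $\pi_1 \geq \pi_2 \geq \cdots \geq \pi_n$ where $\pi_i = v_i / t_i$ for nonnegative reals $v_i$. Let $\mathcal{R} = \max_{i \in [n]} \pi_i \sum_{i' \leq i} t_{i'}$. Then $\sum_{i=1}^n v_i \leq \mathcal{R} \cdot H_{nm}$, where $H_k = \sum_{j=1}^k 1/j$ is the $k$-th harmonic number. -/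
/-!
Write `π i = v i / t i` and `S i = ∑_{i' ≤ i} t i'`. Selling at price `π i` earns `π i * S i ≤ R`,
so `v i = π i * t i ≤ R * t i / S i`. Each of the `t i` terms `1 / j` with `S i - t i < j ≤ S i`
is at least `1 / S i`, so `t i / S i ≤ H_{S i} - H_{S i - t i}`, and these differences telescope
to `H_{∑ t} ≤ H_{nm}`.
-/

/-- The k-th harmonicSum number H_k = ∑_{j=1}^k 1/j. -/
noncomputable def harmonicSum (k : ℕ) : ℝ := ∑ j ∈ Finset.range k, (1 : ℝ) / (j + 1)

open Finset

theorem harmonicSum_mono : Monotone harmonicSum := fun _ _ hab =>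
  sum_le_sum_of_subset_of_nonneg (range_subset_range.mpr hab) fun _ _ _ => by positivity

theorem harmonicSum_add_div_le (a b : ℕ) :
    harmonicSum a + b / (a + b) ≤ harmonicSum (a + b) := by
  rw [harmonicSum, harmonicSum, sum_range_add, add_le_add_iff_left]
  calc (b : ℝ) / (a + b) = ∑ _j ∈ range b, (1 : ℝ) / (a + b) := by
        rw [sum_const, card_range, nsmul_eq_mul, mul_one_div]
    _ ≤ ∑ j ∈ range b, (1 : ℝ) / ((a + j : ℕ) + 1) := by
        refine sum_le_sum fun j hj => one_div_le_one_div_of_le (by positivity) ?_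
        have : a + j + 1 ≤ a + b := by simp only [mem_range] at hj; omega
        exact_mod_cast this

theorem sum_div_prefix_sum_le_harmonicSum {ι : Type*} [LinearOrder ι] (s : Finset ι)
    (t : ι → ℕ) :
    ∑ i ∈ s, (t i : ℝ) / ∑ j ∈ s with j ≤ i, (t j : ℝ) ≤ harmonicSum (∑ i ∈ s, t i) := by
  induction s using Finset.induction_on_max with
  | empty => simp [harmonicSum]
  | insert a s hlt ih =>
    have ha : a ∉ s := fun h => (hlt a h).false
    have h_top : ∑ j ∈ insert a s with j ≤ a, (t j : ℝ) = ∑ j ∈ s, (t j : ℝ) + t a := by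
      rw [filter_true_of_mem fun j hj => ?_, sum_insert ha, add_comm]
      rcases mem_insert.mp hj with rfl | hj
      exacts [le_rfl, (hlt j hj).le]
    have h_below : ∀ i ∈ s, (insert a s).filter (· ≤ i) = s.filter (· ≤ i) := fun i hi => by
      rw [filter_insert, if_neg (hlt i hi).not_ge]
    have h_rest : ∑ i ∈ s, (t i : ℝ) / ∑ j ∈ insert a s with j ≤ i, (t j : ℝ)
        = ∑ i ∈ s, (t i : ℝ) / ∑ j ∈ s with j ≤ i, (t j : ℝ) :=
      sum_congr rfl fun i hi => by rw [h_below i hi]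
    have h_step := harmonicSum_add_div_le (∑ i ∈ s, t i) (t a)
    push_cast at h_step
    calc ∑ i ∈ insert a s, (t i : ℝ) / ∑ j ∈ insert a s with j ≤ i, (t j : ℝ)
        = (t a : ℝ) / (∑ j ∈ s, (t j : ℝ) + t a)
          + ∑ i ∈ s, (t i : ℝ) / ∑ j ∈ s with j ≤ i, (t j : ℝ) := by
          rw [sum_insert ha, h_top, h_rest]
      _ ≤ harmonicSum (∑ i ∈ s, t i + t a) := by linarith
      _ = harmonicSum (∑ i ∈ insert a s, t i) := by rw [sum_insert ha, add_comm]

theorem single_price_harmonicSum_bound_general (n m : ℕ)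
    (t : Fin n → ℕ) (ht : ∀ i, 1 ≤ t i) (htm : ∀ i, t i ≤ m)
    (v : Fin n → ℝ) (hv : ∀ i, 0 ≤ v i)
    (hne : (Finset.univ : Finset (Fin n)).Nonempty)
    (R : ℝ)
    (hR : R = Finset.univ.sup' hne
      (fun i => v i / (t i : ℝ) *
        ∑ i' ∈ Finset.univ.filter (fun i' => i' ≤ i), (t i' : ℝ))) :
    ∑ i, v i ≤ R * harmonicSum (n * m) := by
  set S : Fin n → ℝ := fun i => ∑ i' ∈ univ with i' ≤ i, (t i' : ℝ)
  have h_revenue : ∀ i, v i / t i * S i ≤ R := fun i =>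
    hR ▸ le_sup' (fun i => v i / t i * S i) (mem_univ i)
  obtain ⟨i₀, -⟩ := hne
  have hR₀ : 0 ≤ R := (mul_nonneg (div_nonneg (hv i₀) (by positivity))
    (sum_nonneg fun _ _ => by positivity)).trans (h_revenue i₀)
  have h_share : ∀ i, v i ≤ R * (t i / S i) := fun i => by
    have ht₀ : (0 : ℝ) < t i := by exact_mod_cast ht i
    have hS : (t i : ℝ) ≤ S i := 
      single_le_sum (f := fun i => (t i : ℝ)) (fun _ _ => by positivity) (by simp)
    have hS₀ : 0 < S i := ht₀.trans_le hS
    calc v i = v i / t i * S i * (t i / S i) := by field_simp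
      _ ≤ R * (t i / S i) := by gcongr; exact h_revenue i
  have h_total : ∑ i, t i ≤ n * m := by
    simpa using sum_le_card_nsmul univ t m fun i _ => htm i
  calc ∑ i, v i ≤ ∑ i, R * (t i / S i) := sum_le_sum fun i _ => h_share i
    _ = R * ∑ i, (t i : ℝ) / S i := (mul_sum _ _ _).symm
    _ ≤ R * harmonicSum (∑ i, t i) := by gcongr; exact sum_div_prefix_sum_le_harmonicSum _ t
    _ ≤ R * harmonicSum (n * m) := by gcongr; exact harmonicSum_mono h_total

/-- Single-price scheme: total value is at most H_{nm} times the best single-price revenue. -/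
theorem single_price_harmonicSum_bound (n m : ℕ) (hn : 1 ≤ n) (hm : 1 ≤ m)
    (t : Fin n → ℕ) (ht : ∀ i, 1 ≤ t i) (htm : ∀ i, t i ≤ m)
    (v : Fin n → ℝ) (hv : ∀ i, 0 ≤ v i)
    (hsort : ∀ i j : Fin n, i ≤ j → v j / (t j : ℝ) ≤ v i / (t i : ℝ))
    (hne : (Finset.univ : Finset (Fin n)).Nonempty)
    (R : ℝ)
    (hR : R = Finset.univ.sup' hne
      (fun i => v i / (t i : ℝ) *
        ∑ i' ∈ Finset.univ.filter (fun i' => i' ≤ i), (t i' : ℝ))) :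
    ∑ i, v i ≤ R * harmonicSum (n * m) :=
  single_price_harmonicSum_bound_general n m t ht htm v hv hne R hR
end

section
/- Let items $\mathcal{B}$ be priced by Procedure COMPR run on service set $N_i = \{1,\ldots,i\}$ (players ordered by decreasing per-item value $\pi_k = v_k/|\mathcal{C}_k|$). Then every item that is ever assigned a price receives price at least $\pi_i = \min_{k \in N_i} \pi_k$. -/
/-- Procedure COMPR (given as a trace of `T` steps satisfying its recurrences) run on the
service set `N_i = {1,…,i}`, with buyers ordered by decreasing per-item value
`π_k = v k / |C k|`: every price it ever assigns to an item is at least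
`π_i = min_{k ∈ N_i} π_k`. -/
theorem compr_prices_at_least_pi_i
    {ι : Type*} [DecidableEq ι] (n : ℕ) (i : Fin n)
    (v : Fin n → ℝ) (hv : ∀ k, 0 ≤ v k)
    (C : Fin n → Finset ι) (hCcard : ∀ k, 1 ≤ (C k).card)
    (hsort : ∀ k l : Fin n, k ≤ l →
      v l / ((C l).card : ℝ) ≤ v k / ((C k).card : ℝ))
    (T : ℕ)
    (N : ℕ → Finset (Fin n)) (Cs : ℕ → Fin n → Finset ι)
    (vs : ℕ → Fin n → ℝ) (sel : ℕ → Fin n) (pr : ℕ → ℝ)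
    (hN0 : N 0 = Finset.univ.filter (fun k => k ≤ i))
    (hC0 : Cs 0 = C) (hv0 : vs 0 = v)
    (hselmem : ∀ t < T, sel t ∈ N t)
    (hselcard : ∀ t < T, 0 < (Cs t (sel t)).card)
    (hprice : ∀ t < T, pr t = vs t (sel t) / ((Cs t (sel t)).card : ℝ))
    (hmin : ∀ t < T, ∀ k ∈ N t, 0 < (Cs t k).card →
      pr t ≤ vs t k / ((Cs t k).card : ℝ))
    (hCupd : ∀ t < T, ∀ k, Cs (t + 1) k = Cs t k \ Cs t (sel t))
    (hvupd : ∀ t < T, ∀ k,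
      vs (t + 1) k = vs t k - ((Cs t k ∩ Cs t (sel t)).card : ℝ) * pr t)
    (hNupd : ∀ t < T, N (t + 1) = N t \ {sel t}) :
    ∀ t < T, v i / ((C i).card : ℝ) ≤ pr t := by
  have inv : ∀ t ≤ T, ∀ k ∈ N t, 0 < (Cs t k).card →
      v i / ((C i).card : ℝ) ≤ vs t k / ((Cs t k).card : ℝ) := by
    intro t
    induction t with
    | zero =>
      intro _ k hk _
      rw [hC0, hv0]
      rw [hN0, Finset.mem_filter] at hk
      exact hsort k i hk.2
    | succ t ih =>
      intro hT k hk hc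
      have htT : t < T := hT
      have hk' : k ∈ N t := by
        rw [hNupd t htT] at hk
        exact (Finset.mem_sdiff.mp hk).1
      have hsub : Cs (t + 1) k ⊆ Cs t k := by
        rw [hCupd t htT]; exact Finset.sdiff_subset
      have hct : 0 < (Cs t k).card := lt_of_lt_of_le hc (Finset.card_le_card hsub)
      have hih := ih (le_of_lt htT) k hk' hct
      have hpr := hmin t htT k hk' hct
      have hcard : (Cs (t + 1) k).card + (Cs t k ∩ Cs t (sel t)).card = (Cs t k).card := by
        rw [hCupd t htT k]
        exact Finset.card_sdiff_add_card_inter _ _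
      have hcardR : ((Cs (t + 1) k).card : ℝ) + ((Cs t k ∩ Cs t (sel t)).card : ℝ)
          = ((Cs t k).card : ℝ) := by exact_mod_cast congrArg Nat.cast hcard
      rw [hvupd t htT k]
      set c : ℝ := ((Cs t k).card : ℝ)
      set c' : ℝ := ((Cs (t + 1) k).card : ℝ)
      set m : ℝ := ((Cs t k ∩ Cs t (sel t)).card : ℝ)
      have hc' : (0 : ℝ) < c' := by positivity
      have hcpos : (0 : ℝ) < c := by unfold c; exact_mod_cast hct
      have hm : (0 : ℝ) ≤ m := Nat.cast_nonneg _
      have key : vs t k / c ≤ (vs t k - m * pr t) / c' := by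
        rw [div_le_div_iff₀ hcpos hc']
        have h1 : pr t * c ≤ vs t k := (le_div_iff₀ hcpos).mp hpr
        have expand : (vs t k - m * pr t) * c
            = vs t k * c' + (vs t k * m - m * (pr t * c)) := by
          rw [← hcardR]; ring
        nlinarith [mul_le_mul_of_nonneg_left h1 hm, expand]
      calc v i / ((C i).card : ℝ) ≤ vs t k / c := hih
        _ ≤ _ := key
  intro t ht
  rw [hprice t ht]
  exact inv t (le_of_lt ht) (sel t) (hselmem t ht) (hselcard t ht)
end

section
/- Let $n$ buyers have values $v_1 \geq v_2 \geq \cdots \geq v_n > 0$ for a single item with $v_1 = H$, and let the price be drawn uniformly at random from $\{H/2^{l-1} : l = 1,\ldots,s\}$ with $s = \lfloor \log_2(2n) \rfloor + 1$ chosen so that $H/2^{s-1} \leq v_i$ for all $i$ with $v_i \geq H/(2n)$. Then the expected revenue is at least $\frac{1}{2s}\sum_{i : v_i \geq H/(2n)} v_i \geq \frac{1}{2s}\left(\sum_{i=1}^n v_i - H/2\right)$. -/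
/-- Single-item random single-price scheme of Balcan et al.: with prices `H / 2^l`
(`l = 0, …, s-1`) chosen uniformly at random, and the grid reaching below every value
`v i ≥ H / (2n)`, the expected revenue is at least `(1/(2s)) ∑_{i : v i ≥ H/(2n)} v i`,
which is at least `(1/(2s)) (∑ i, v i - H/2)`. -/
theorem random_single_price_expected_revenue (n : ℕ) (hn : 1 ≤ n)
    (H : ℝ) (v : Fin n → ℝ)
    (hv : ∀ i, 0 < v i) (hvH : ∀ i, v i ≤ H)
    (hsort : ∀ i j : Fin n, i ≤ j → v j ≤ v i)
    (hH : ∃ i : Fin n, v i = H)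
    (s : ℕ) (hs : 1 ≤ s)
    (hgrid : ∀ i : Fin n, H / (2 * n) ≤ v i → H / 2 ^ (s - 1) ≤ v i) :
    (1 / (2 * s) : ℝ) *
        ∑ i ∈ Finset.univ.filter (fun i : Fin n => H / (2 * n) ≤ v i), v i ≤
      (1 / s : ℝ) * ∑ l ∈ Finset.range s,
        H / 2 ^ l *
          ((Finset.univ.filter (fun i : Fin n => H / 2 ^ l ≤ v i)).card : ℝ) ∧
    (1 / (2 * s) : ℝ) * (∑ i, v i - H / 2) ≤
      (1 / (2 * s) : ℝ) *
        ∑ i ∈ Finset.univ.filter (fun i : Fin n => H / (2 * n) ≤ v i), v i := by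
  classical
  obtain ⟨i0, hi0⟩ := hH
  have hH0 : 0 < H := hi0 ▸ hv i0
  have hs0 : (0:ℝ) < s := by exact_mod_cast hs
  have hn0 : (0:ℝ) < n := by exact_mod_cast hn
  constructor
  · -- Part 1
    have key : (∑ i ∈ Finset.univ.filter (fun i : Fin n => H / (2 * n) ≤ v i), v i) / 2 ≤
        ∑ l ∈ Finset.range s, H / 2 ^ l *
          ((Finset.univ.filter (fun i : Fin n => H / 2 ^ l ≤ v i)).card : ℝ) := by
      have hrw : ∀ l, H / 2 ^ l *
          ((Finset.univ.filter (fun i : Fin n => H / 2 ^ l ≤ v i)).card : ℝ)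
          = ∑ i : Fin n, if H / 2 ^ l ≤ v i then H / 2 ^ l else 0 := by
        intro l
        rw [Finset.sum_ite, Finset.sum_const, Finset.sum_const, smul_zero, add_zero,
          nsmul_eq_mul, mul_comm]
      simp_rw [hrw]
      rw [Finset.sum_comm, Finset.sum_div]
      calc ∑ i ∈ Finset.univ.filter (fun i : Fin n => H / (2 * n) ≤ v i), v i / 2
          ≤ ∑ i ∈ Finset.univ.filter (fun i : Fin n => H / (2 * n) ≤ v i),
              ∑ l ∈ Finset.range s, if H / 2 ^ l ≤ v i then H / 2 ^ l else 0 := by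
            apply Finset.sum_le_sum
            intro i hi
            simp only [Finset.mem_filter, Finset.mem_univ, true_and] at hi
            have hex : ∃ l, H / 2 ^ l ≤ v i := ⟨s - 1, hgrid i hi⟩
            set l := Nat.find hex with hl
            have hlP : H / 2 ^ l ≤ v i := Nat.find_spec hex
            have hls : l < s := lt_of_le_of_lt (Nat.find_le (hgrid i hi))
              (Nat.sub_lt (by omega) one_pos)
            have hhalf : v i / 2 ≤ H / 2 ^ l := by
              rcases Nat.eq_zero_or_pos l with h0 | h0
              · rw [h0]; simp only [pow_zero, div_one]
                linarith [hv i, hvH i]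
              · have hmin : ¬ (H / 2 ^ (l - 1) ≤ v i) := Nat.find_min hex (by omega)
                push_neg at hmin
                have hpow : (2:ℝ) ^ l = 2 ^ (l - 1) * 2 := by
                  rw [← pow_succ]; congr 1; omega
                have heq : H / 2 ^ (l - 1) = 2 * (H / 2 ^ l) := by
                  rw [hpow, ← div_div]; ring
                rw [heq] at hmin
                linarith
            calc v i / 2 ≤ (if H / 2 ^ l ≤ v i then H / 2 ^ l else 0) := by
                  rw [if_pos hlP]; exact hhalf
              _ ≤ ∑ l' ∈ Finset.range s, if H / 2 ^ l' ≤ v i then H / 2 ^ l' else 0 := by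
                  apply Finset.single_le_sum (f := fun l' =>
                    if H / 2 ^ l' ≤ v i then H / 2 ^ l' else 0)
                  · intro j _; positivity
                  · exact Finset.mem_range.mpr hls
        _ ≤ ∑ i : Fin n, ∑ l ∈ Finset.range s, if H / 2 ^ l ≤ v i then H / 2 ^ l else 0 := by
            apply Finset.sum_le_sum_of_subset_of_nonneg (Finset.filter_subset _ _)
            intro i _ _
            apply Finset.sum_nonneg
            intro j _; positivity
    have h1 : (1 / (2 * s) : ℝ) = (1 / s) * (1 / 2) := by field_simp
    rw [h1, mul_assoc]
    have key' : (1 / 2 : ℝ) *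
        ∑ i ∈ Finset.univ.filter (fun i : Fin n => H / (2 * n) ≤ v i), v i ≤
        ∑ l ∈ Finset.range s, H / 2 ^ l *
          ((Finset.univ.filter (fun i : Fin n => H / 2 ^ l ≤ v i)).card : ℝ) := by
      linarith
    exact mul_le_mul_of_nonneg_left key' (by positivity)
  · -- Part 2
    apply mul_le_mul_of_nonneg_left _ (by positivity)
    have hsplit := Finset.sum_filter_add_sum_filter_not Finset.univ
      (fun i : Fin n => H / (2 * n) ≤ v i) v
    have hbound : ∑ i ∈ Finset.univ.filter (fun i : Fin n => ¬ (H / (2 * n) ≤ v i)), v i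
        ≤ H / 2 := by
      calc ∑ i ∈ Finset.univ.filter (fun i : Fin n => ¬ (H / (2 * n) ≤ v i)), v i
          ≤ ∑ _i ∈ Finset.univ.filter (fun i : Fin n => ¬ (H / (2 * n) ≤ v i)), H / (2 * n) := by
            apply Finset.sum_le_sum
            intro i hi
            exact le_of_lt (not_le.mp (Finset.mem_filter.mp hi).2)
        _ = ((Finset.univ.filter (fun i : Fin n => ¬ (H / (2 * n) ≤ v i))).card : ℝ)
              * (H / (2 * n)) := by rw [Finset.sum_const, nsmul_eq_mul]
        _ ≤ (n : ℝ) * (H / (2 * n)) := by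
            apply mul_le_mul_of_nonneg_right _ (by positivity)
            exact_mod_cast (Finset.card_filter_le _ _).trans_eq (Finset.card_fin n)
        _ = H / 2 := by field_simp
    linarith
end

section
/- In Procedure COMPR run on service set $N$, residual values remain nonnegative throughout: for every buyer $k$ and every step $t$ before $k$ is selected or removed, $v_k^t \geq 0$, and moreover $v_k^t \geq \pi_k \cdot |\mathcal{C}_k^t|$ where $\pi_k = v_k/|\mathcal{C}_k|$ is buyer $k$'s initial per-item value. -/
/-- In Procedure COMPR (given as a trace satisfying its recurrences), residual values stay
nonnegative throughout, and moreover each remaining buyer's residual value is at least his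
initial per-item value times his residual set size. -/
theorem compr_residual_values_nonneg
    {ι : Type*} [DecidableEq ι] (n : ℕ)
    (v : Fin n → ℝ) (hv : ∀ k, 0 ≤ v k)
    (C : Fin n → Finset ι) (hCcard : ∀ k, 1 ≤ (C k).card)
    (T : ℕ)
    (N : ℕ → Finset (Fin n)) (Cs : ℕ → Fin n → Finset ι)
    (vs : ℕ → Fin n → ℝ) (sel : ℕ → Fin n) (pr : ℕ → ℝ)
    (hC0 : Cs 0 = C) (hv0 : vs 0 = v)
    (hselmem : ∀ t < T, sel t ∈ N t)
    (hselcard : ∀ t < T, 0 < (Cs t (sel t)).card)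
    (hprice : ∀ t < T, pr t = vs t (sel t) / ((Cs t (sel t)).card : ℝ))
    (hmin : ∀ t < T, ∀ k ∈ N t, 0 < (Cs t k).card →
      pr t ≤ vs t k / ((Cs t k).card : ℝ))
    (hCupd : ∀ t < T, ∀ k, Cs (t + 1) k = Cs t k \ Cs t (sel t))
    (hvupd : ∀ t < T, ∀ k,
      vs (t + 1) k = vs t k - ((Cs t k ∩ Cs t (sel t)).card : ℝ) * pr t)
    (hNupd : ∀ t < T, N (t + 1) = N t \ {sel t}) :
    ∀ t ≤ T, ∀ k ∈ N t,
      0 ≤ vs t k ∧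
      v k / ((C k).card : ℝ) * ((Cs t k).card : ℝ) ≤ vs t k := by
  intro t
  induction t with
  | zero =>
    intro _ k _
    have hc : (0:ℝ) < ((C k).card : ℝ) := by
      exact_mod_cast Nat.lt_of_lt_of_le Nat.zero_lt_one (hCcard k)
    refine ⟨by rw [hv0]; exact hv k, ?_⟩
    rw [hv0, hC0, div_mul_cancel₀ _ (ne_of_gt hc)]
  | succ t ih =>
    intro ht k hk
    have ht' : t < T := ht
    have htT : t ≤ T := le_of_lt ht'
    have hkN : k ∈ N t := by
      rw [hNupd t ht'] at hk
      exact (Finset.mem_sdiff.mp hk).1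
    obtain ⟨hvk0, hπk⟩ := ih htT k hkN
    have hcCk : (0:ℝ) < ((C k).card : ℝ) := by
      exact_mod_cast Nat.lt_of_lt_of_le Nat.zero_lt_one (hCcard k)
    have hπ : 0 ≤ v k / ((C k).card : ℝ) := div_nonneg (hv k) (le_of_lt hcCk)
    obtain ⟨hvsel, -⟩ := ih htT _ (hselmem t ht')
    have hpr : 0 ≤ pr t := by
      rw [hprice t ht']
      exact div_nonneg hvsel (by positivity)
    have hCu := hCupd t ht' k
    have hvu := hvupd t ht' k
    have hintcard : ((Cs t k ∩ Cs t (sel t)).card : ℝ) ≤ ((Cs t k).card : ℝ) := by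
      exact_mod_cast Finset.card_le_card Finset.inter_subset_left
    have hcardsd : ((Cs (t+1) k).card : ℝ)
        = ((Cs t k).card : ℝ) - ((Cs t k ∩ Cs t (sel t)).card : ℝ) := by
      rw [hCu]
      have := Finset.card_sdiff_add_card_inter (Cs t k) (Cs t (sel t))
      have : (Cs t k \ Cs t (sel t)).card + (Cs t k ∩ Cs t (sel t)).card
          = (Cs t k).card := this
      push_cast [← this]
      ring
    by_cases h0 : (Cs t k).card = 0
    · have hempty : Cs t k = ∅ := Finset.card_eq_zero.mp h0
      have hint0 : ((Cs t k ∩ Cs t (sel t)).card : ℝ) = 0 := by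
        rw [hempty]; simp
      have hveq : vs (t+1) k = vs t k := by rw [hvu, hint0]; ring
      have hc1 : ((Cs (t+1) k).card : ℝ) = 0 := by
        rw [hcardsd, hint0, h0]; push_cast; ring
      refine ⟨by rw [hveq]; exact hvk0, ?_⟩
      rw [hveq, hc1, mul_zero]
      exact hvk0
    · have hpos : 0 < (Cs t k).card := Nat.pos_of_ne_zero h0
      have hcR : (0:ℝ) < ((Cs t k).card : ℝ) := by exact_mod_cast hpos
      have hmink := hmin t ht' k hkN hpos
      have hint0 : (0:ℝ) ≤ ((Cs t k ∩ Cs t (sel t)).card : ℝ) := by positivity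
      set π := v k / ((C k).card : ℝ) with hπdef
      set c := ((Cs t k).card : ℝ)
      set m := ((Cs t k ∩ Cs t (sel t)).card : ℝ)
      have hπle : π * c ≤ vs t k := hπk
      have key : π * (c - m) ≤ vs t k - m * pr t := by
        have h1 : m * pr t ≤ m * (vs t k / c) :=
          mul_le_mul_of_nonneg_left hmink hint0
        have hd : π ≤ vs t k / c := (le_div_iff₀ hcR).mpr hπle
        have h3 : π * (c - m) ≤ (vs t k / c) * (c - m) :=
          mul_le_mul_of_nonneg_right hd (by linarith)
        have hvc : (vs t k / c) * c = vs t k := div_mul_cancel₀ _ (ne_of_gt hcR)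
        nlinarith [h1, h3, hvc]
      constructor
      · rw [hvu]
        have : 0 ≤ π * (c - m) := mul_nonneg hπ (by linarith)
        linarith
      · rw [hvu, hcardsd]
        exact key
end
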